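/- For every integer n ≥ 2 and every ε ∈ (0,1), h(x, ε) tends to −n·k_n as x → +∞. -/

import Mathlib

/-- `k_n = (1/(4n)) · Σ_{k=1}^{n-1} 1/sin(kπ/n)` -/
noncomputable def kn (n : ℕ) : ℝ :=
  (1 / (4 * n)) * ∑ k ∈ Finset.Icc 1 (n - 1), 1 / Real.sin (k * Real.pi / n)

/-- `φ_k = (2k-1)π/n`, and `u_k = cos φ_k`. -/
noncomputable def phi (n k : ℕ) : ℝ := (2 * (k : ℝ) - 1) * Real.pi / n

/-- The reduced central configuration function
`h(x, ε) = −n·k_n·(ε−x³)/(1−x³) − (x²/(1−x³))·Σ_{k=1}^{n} [x(1−ε) − (1−εx²)u_k]/(1+x²−2xu_k)^{3/2}`,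
where `u_k = cos φ_k`.  Solutions of `h(x, ε) = μ` are the rosette central configurations. -/
noncomputable def h (n : ℕ) (x ε : ℝ) : ℝ :=
  -((n : ℝ) * kn n) * (ε - x ^ 3) / (1 - x ^ 3) -
    (x ^ 2 / (1 - x ^ 3)) * ∑ k ∈ Finset.Icc 1 n,
      (x * (1 - ε) - (1 - ε * x ^ 2) * Real.cos (phi n k)) /
        (1 + x ^ 2 - 2 * x * Real.cos (phi n k)) ^ ((3 : ℝ) / 2)

/-!
As `x → ∞` the ratio `(ε − x³)/(1 − x³)` tends to `1`, the prefactor `x²/(1 − x³)` tends to `0`,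
and so does each summand: its numerator is quadratic in `x` while
`(1 + x² − 2xu)^{3/2} ~ x³`.
-/

open Filter Topology Real

lemma tendsto_const_sub_div_const_sub {α : Type*} {l : Filter α} {f : α → ℝ}
    (hf : Tendsto f l atTop) (a b : ℝ) :
    Tendsto (fun x => (a - f x) / (b - f x)) l (𝓝 1) := by
  have hden : Tendsto (fun x => b - f x) l atBot :=
    tendsto_atBot_add_const_left l b (tendsto_neg_atTop_atBot.comp hf)
  have hlim := (tendsto_const_nhds (x := a - b)).div_atBot hden |>.const_add 1
  rw [add_zero] at hlim
  refine hlim.congr' ?_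
  filter_upwards [hden.eventually_ne_atBot 0] with x hx
  field_simp
  ring

lemma tendsto_sq_div_one_sub_pow_three :
    Tendsto (fun x : ℝ => x ^ 2 / (1 - x ^ 3)) atTop (𝓝 0) := by
  have hlim := tendsto_inv_atTop_zero.neg.mul
    (tendsto_const_sub_div_const_sub (tendsto_pow_atTop three_ne_zero) 0 1)
  rw [neg_zero, zero_mul] at hlim
  refine hlim.congr' ?_
  filter_upwards [eventually_ne_atTop 0] with x hx
  field_simp
  ring

lemma tendsto_quadratic_div_sq (a b c : ℝ) :
    Tendsto (fun x : ℝ => (a + b * x + c * x ^ 2) / x ^ 2) atTop (𝓝 c) := by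
  have hlim := ((tendsto_inv_atTop_zero.pow 2).const_mul a).add
    ((tendsto_inv_atTop_zero (𝕜 := ℝ)).const_mul b) |>.add_const c
  rw [zero_pow two_ne_zero, mul_zero, mul_zero, add_zero, zero_add] at hlim
  refine hlim.congr' ?_
  filter_upwards [eventually_ne_atTop 0] with x hx
  field_simp

lemma sq_rpow_three_halves {x : ℝ} (hx : 0 ≤ x) : (x ^ 2) ^ ((3 : ℝ) / 2) = x ^ 3 := by
  rw [← rpow_natCast x 2, ← rpow_mul hx, ← rpow_natCast x 3]
  norm_num

lemma tendsto_summand_atTop (ε u : ℝ) :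
    Tendsto (fun x : ℝ => (x * (1 - ε) - (1 - ε * x ^ 2) * u) /
      (1 + x ^ 2 - 2 * x * u) ^ ((3 : ℝ) / 2)) atTop (𝓝 0) := by
  have hnum : Tendsto (fun x : ℝ => (x * (1 - ε) - (1 - ε * x ^ 2) * u) / x ^ 2) atTop
      (𝓝 (ε * u)) :=
    (tendsto_quadratic_div_sq (-u) (1 - ε) (ε * u)).congr fun x => by ring
  have hden : Tendsto (fun x : ℝ => (1 + x ^ 2 - 2 * x * u) / x ^ 2) atTop (𝓝 1) :=
    (tendsto_quadratic_div_sq 1 (-2 * u) 1).congr fun x => by ring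
  have hlim := (hnum.div (hden.rpow_const (p := (3 : ℝ) / 2) (Or.inl one_ne_zero))
    (by norm_num)).mul tendsto_inv_atTop_zero
  rw [mul_zero] at hlim
  refine hlim.congr' ?_
  filter_upwards [eventually_gt_atTop (2 * |u|)] with x hx
  have hx0 : 0 < x := lt_of_le_of_lt (by positivity) hx
  have hD : 0 < 1 + x ^ 2 - 2 * x * u := by nlinarith [le_abs_self u]
  rw [Pi.div_apply, div_rpow hD.le (sq_nonneg x), sq_rpow_three_halves hx0.le]
  have : 0 < (1 + x ^ 2 - 2 * x * u) ^ ((3 : ℝ) / 2) := rpow_pos_of_pos hD _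
  field_simp

theorem h_tendsto_atTop_general (n : ℕ) (ε : ℝ) :
    Filter.Tendsto (fun x => h n x ε) Filter.atTop (nhds (-((n : ℝ) * kn n))) := by
  have hratio := (tendsto_const_sub_div_const_sub (tendsto_pow_atTop three_ne_zero) ε 1).const_mul
    (-((n : ℝ) * kn n))
  have hsum := tendsto_finsetSum (Finset.Icc 1 n)
    fun k _ => tendsto_summand_atTop ε (cos (phi n k))
  have hlim := hratio.sub (tendsto_sq_div_one_sub_pow_three.mul hsum)
  rw [mul_one, Finset.sum_const_zero, mul_zero, sub_zero] at hlim
  exact hlim.congr fun x => by rw [h, mul_div_assoc]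

/-- For `n ≥ 2`, `ε ∈ (0,1)`: `h(x, ε) → −n·k_n` as `x → +∞`. -/
theorem h_tendsto_atTop (n : ℕ) (hn : 2 ≤ n) (ε : ℝ) (hε : ε ∈ Set.Ioo (0 : ℝ) 1) :
    Filter.Tendsto (fun x => h n x ε) Filter.atTop (nhds (-((n : ℝ) * kn n))) :=
  h_tendsto_atTop_general n ε
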